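/- arXiv:1510.06122 — 5 statements merged into one kernel-verified Lean document; each statement's English description precedes it below -/
import Mathlib

section
/- Let f, g ∈ ℂ[z] be polynomials, α ∈ ℂ, and r > 0. Suppose that (a) f(z) ≠ α for all z with |z| = r; (b) |g(z) − f(z)| < |f(z) − α| for all z with |z| = r; and (c) for every y with |y| < r and f(y) = α, the polynomial g − f vanishes at y to order at least the multiplicity of y as a root of f − α. Then {z : |z| < r and g(z) = α} = {z : |z| < r and f(z) = α}. -/
/-!
Write `f - α = P * F₁`, where `P` collects the roots of `f - α` in the disc with their
multiplicities; hypothesis (c) makes `P` divide `g - f` as well, say `g - f = P * Q`. Then `F₁`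
has no zeros on the closed disc and `‖Q‖ < ‖F₁‖` on the circle, hence inside too, by the maximum
modulus principle for `Q / F₁`. At a zero `z` of `g - α` in the disc with `f z ≠ α` we would have
`Q z = -F₁ z`, which is impossible. Conversely, (c) forces `g = f` at every `α`-point of `f` in
the disc.
-/

open Polynomial Metric Bornology

namespace Polynomial

variable {R : Type*} [CommRing R]

theorem IsRoot.of_pow_rootMultiplicity_dvd {p q : R[X]} {x : R} (hp : p ≠ 0) (hx : p.IsRoot x)
    (h : (X - C x) ^ p.rootMultiplicity x ∣ q) : q.IsRoot x :=
  dvd_iff_isRoot.1 <| (dvd_pow_self _ ((rootMultiplicity_pos hp).2 hx).ne').trans h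

variable [IsDomain R]

open Classical in
noncomputable def rootFactorIn (p : R[X]) (s : Set R) : R[X] :=
  ((p.roots.filter (· ∈ s)).map (X - C ·)).prod

theorem rootFactorIn_dvd (p : R[X]) (s : Set R) : p.rootFactorIn s ∣ p := by
  classical
  exact (Multiset.prod_dvd_prod_of_le (Multiset.map_le_map (Multiset.filter_le _ _))).trans
    (prod_multiset_X_sub_C_dvd p)

theorem rootFactorIn_dvd_of_forall {p q : R[X]} {s : Set R}
    (h : ∀ y ∈ s, p.IsRoot y → (X - C y) ^ p.rootMultiplicity y ∣ q) :
    p.rootFactorIn s ∣ q := by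
  classical
  rcases eq_or_ne q 0 with rfl | hq
  · exact dvd_zero _
  refine (Multiset.prod_X_sub_C_dvd_iff_le_roots hq _).2 (Multiset.le_iff_count.2 fun y => ?_)
  rw [Multiset.count_filter, count_roots, count_roots]
  split_ifs with hy
  · by_cases hpy : p.IsRoot y
    · exact (le_rootMultiplicity_iff hq).2 (h y hy hpy)
    · simp [rootMultiplicity_eq_zero hpy]
  · exact Nat.zero_le _

theorem rootMultiplicity_rootFactorIn {p : R[X]} {s : Set R} {x : R} (hx : x ∈ s) :
    (p.rootFactorIn s).rootMultiplicity x = p.rootMultiplicity x := by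
  classical
  rw [rootFactorIn, ← count_roots, roots_multiset_prod_X_sub_C, Multiset.count_filter_of_pos hx,
    count_roots]

theorem not_isRoot_of_rootFactorIn_mul_eq {p q : R[X]} {s : Set R} {x : R} (hp : p ≠ 0)
    (h : p.rootFactorIn s * q = p) (hx : x ∈ s) : ¬ q.IsRoot x := by
  intro hqx
  have hmul := rootMultiplicity_mul (x := x) (h ▸ hp)
  rw [h, rootMultiplicity_rootFactorIn hx, left_eq_add] at hmul
  exact ((rootMultiplicity_pos (right_ne_zero_of_mul (h ▸ hp))).2 hqx).ne' hmul

end Polynomial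

namespace Complex

variable {E F : Type*} [NormedAddCommGroup E] [NormedSpace ℂ E] [Nontrivial E]
  [FiniteDimensional ℂ E] [NormedAddCommGroup F] [NormedSpace ℂ F]

theorem norm_lt_of_forall_mem_frontier_norm_lt {f : E → F} {U : Set E} (hU : IsBounded U)
    (hd : DiffContOnCl ℂ f U) {C : ℝ} (hC : ∀ z ∈ frontier U, ‖f z‖ < C) {z : E}
    (hz : z ∈ closure U) : ‖f z‖ < C := by
  obtain ⟨w, hw, hmax⟩ :=
    exists_mem_frontier_isMaxOn_norm hU (closure_nonempty_iff.1 ⟨z, hz⟩) hd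
  exact (hmax hz).out.trans_lt (hC w hw)

end Complex

namespace Polynomial

theorem norm_eval_lt_of_forall_mem_sphere {p q : ℂ[X]} {c w : ℂ} {r : ℝ}
    (hq : ∀ z ∈ closedBall c r, q.eval z ≠ 0)
    (h : ∀ z ∈ sphere c r, ‖p.eval z‖ < ‖q.eval z‖) (hw : w ∈ ball c r) :
    ‖p.eval w‖ < ‖q.eval w‖ := by
  have hr : r ≠ 0 := (pos_of_mem_ball hw).ne'
  have hd : DiffContOnCl ℂ (fun z => p.eval z / q.eval z) (ball c r) := by
    refine DifferentiableOn.diffContOnCl ?_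
    rw [closure_ball c hr]
    exact p.differentiable.differentiableOn.div q.differentiable.differentiableOn hq
  have hlt := Complex.norm_lt_of_forall_mem_frontier_norm_lt isBounded_ball hd (C := 1)
    (by
      rw [frontier_ball c hr]
      intro z hz
      rw [norm_div, div_lt_one ((norm_nonneg _).trans_lt (h z hz))]
      exact h z hz)
    (subset_closure hw)
  rwa [norm_div, div_lt_one (norm_pos_iff.2 (hq w (ball_subset_closedBall hw)))] at hlt

theorem isRoot_of_isRoot_add {p q : ℂ[X]} {c z : ℂ} {r : ℝ}
    (hlt : ∀ y ∈ sphere c r, ‖q.eval y‖ < ‖p.eval y‖)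
    (hdvd : ∀ y ∈ ball c r, p.IsRoot y → (X - C y) ^ p.rootMultiplicity y ∣ q)
    (hz : z ∈ ball c r) (hroot : (p + q).IsRoot z) : p.IsRoot z := by
  by_contra hpz
  have hp : p ≠ 0 := by rintro rfl; exact hpz (by simp)
  obtain ⟨p₁, hp₁⟩ := rootFactorIn_dvd p (ball c r)
  obtain ⟨q₁, hq₁⟩ := rootFactorIn_dvd_of_forall hdvd
  set P := p.rootFactorIn (ball c r)
  have hPz : P.eval z ≠ 0 := fun h => hpz (eval_eq_zero_of_dvd_of_eval_eq_zero ⟨p₁, hp₁⟩ h)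
  have hp₁_ne_zero : ∀ y ∈ closedBall c r, p₁.eval y ≠ 0 := by
    intro y hy
    rcases (mem_closedBall.1 hy).lt_or_eq with hy | hy
    · exact not_isRoot_of_rootFactorIn_mul_eq hp hp₁.symm hy
    · intro h0
      have := hlt y (mem_sphere.2 hy)
      rw [hp₁, eval_mul, h0, mul_zero, norm_zero] at this
      exact (norm_nonneg _).not_gt this
  have hlt₁ : ∀ y ∈ sphere c r, ‖q₁.eval y‖ < ‖p₁.eval y‖ := by
    intro y hy
    have := hlt y hy
    rw [hp₁, hq₁, eval_mul, eval_mul, norm_mul, norm_mul] at this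
    exact lt_of_mul_lt_mul_left this (norm_nonneg _)
  have hsum : P.eval z * (p₁.eval z + q₁.eval z) = 0 := by
    rw [mul_add, ← eval_mul, ← eval_mul, ← hp₁, ← hq₁, ← eval_add]
    exact hroot
  have hq₁z : q₁.eval z = -p₁.eval z :=
    eq_neg_of_add_eq_zero_right ((mul_eq_zero.1 hsum).resolve_left hPz)
  have := norm_eval_lt_of_forall_mem_sphere hp₁_ne_zero hlt₁ hz
  rw [hq₁z, norm_neg] at this
  exact this.false

end Polynomial

theorem rouche_same_preimages_general (f g : Polynomial ℂ) (α : ℂ) (r : ℝ)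
    (hb : ∀ z : ℂ, ‖z‖ = r →
      ‖g.eval z - f.eval z‖ < ‖f.eval z - α‖)
    (hc : ∀ y : ℂ, ‖y‖ < r → f.eval y = α →
      (Polynomial.X - Polynomial.C y) ^ ((f - Polynomial.C α).rootMultiplicity y) ∣ (g - f)) :
    {z : ℂ | ‖z‖ < r ∧ g.eval z = α} =
      {z : ℂ | ‖z‖ < r ∧ f.eval z = α} := by
  have hlt : ∀ z ∈ sphere (0 : ℂ) r, ‖(g - f).eval z‖ < ‖(f - C α).eval z‖ := fun z hz => by
    simpa using hb z (mem_sphere_zero_iff_norm.1 hz)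
  have hdvd : ∀ y ∈ ball (0 : ℂ) r, (f - C α).IsRoot y →
      (X - C y) ^ (f - C α).rootMultiplicity y ∣ g - f := fun y hy hfy =>
    hc y (mem_ball_zero_iff.1 hy) (by simpa [sub_eq_zero] using hfy)
  ext z
  simp only [Set.mem_ofPred_eq, ← mem_ball_zero_iff, and_congr_right_iff]
  intro hz
  constructor
  · intro hgz
    have hroot : (f - C α + (g - f)).IsRoot z := by simp [hgz]
    simpa [sub_eq_zero] using isRoot_of_isRoot_add hlt hdvd hz hroot
  · intro hfz
    have hroot : (f - C α).IsRoot z := by simp [hfz]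
    have hF : f - C α ≠ 0 := by
      intro h0
      obtain ⟨y, hy⟩ := (NormedSpace.sphere_nonempty (x := (0 : ℂ))).2 (pos_of_mem_ball hz).le
      exact (norm_nonneg _).not_gt (by simpa [h0] using hlt y hy)
    simpa [sub_eq_zero, hfz] using hroot.of_pow_rootMultiplicity_dvd hF (hdvd z hz hroot)

/-- A Rouché-type statement for polynomials. If `f(z) ≠ α` on `|z| = r`,
`|g(z) - f(z)| < |f(z) - α|` on `|z| = r`, and `g - f` vanishes at every root `y` of
`f - α` in `|y| < r` to order at least the multiplicity of `y`, then `f` and `g` have the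
same `α`-points in the open disc of radius `r`. -/
theorem rouche_same_preimages (f g : Polynomial ℂ) (α : ℂ) (r : ℝ) (hr : 0 < r)
    (ha : ∀ z : ℂ, ‖z‖ = r → f.eval z ≠ α)
    (hb : ∀ z : ℂ, ‖z‖ = r →
      ‖g.eval z - f.eval z‖ < ‖f.eval z - α‖)
    (hc : ∀ y : ℂ, ‖y‖ < r → f.eval y = α →
      (Polynomial.X - Polynomial.C y) ^ ((f - Polynomial.C α).rootMultiplicity y) ∣ (g - f)) :
    {z : ℂ | ‖z‖ < r ∧ g.eval z = α} =
      {z : ℂ | ‖z‖ < r ∧ f.eval z = α} :=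
  rouche_same_preimages_general f g α r hb hc
end

section
/- There exists an enumeration (α_n)_{n≥1} of Q̄, i.e. a bijection n ↦ α_n from the positive integers onto the set of algebraic numbers in ℂ, such that α_1 = 0 and for every n ≥ 1: α_{3n−1} and α_{3n} are non-real with α_{3n} equal to the complex conjugate of α_{3n−1}, α_{3n+1} is real, and |α_{3n+i}| < n for each i ∈ {−1, 0, 1}. -/
/-!
Enumerate the real algebraic numbers as `ρ 0 = 0, ρ 1, …` with `‖ρ n‖ < n` for `n ≥ 1`, and the
algebraic numbers in the open upper half-plane as `ζ 0, ζ 1, …` with `‖ζ n‖ < n + 1`; then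
`α (3n + 1) = ρ n`, `α (3n + 2) = ζ n` and `α (3n + 3) = conj (ζ n)` enumerate all of `Q̄`.

Both enumerations exist because each of these countable sets has infinitely many elements of norm
`< 1`. Fix any enumeration of such a set and choose greedily: at step `n` take the first element of
norm `< n + 1` not used before. This never gets stuck, and an element of norm `< N + 1` at position
`k` is used by step `N + k`, since from step `N` on only elements at positions `≤ k` are chosen.
-/

open Set Complex ComplexConjugate

namespace Nat

variable {P : ℕ → Set ℕ} (hP : ∀ n, (P n).Infinite)

open Classical in
noncomputable def greedyChosen : ℕ → Finset ℕ
  | 0 => ∅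
  | n + 1 =>
    insert (Nat.find ((hP n).sdiff (greedyChosen n).finite_toSet).nonempty) (greedyChosen n)

open Classical in
noncomputable def greedyPick (n : ℕ) : ℕ :=
  Nat.find ((hP n).sdiff (greedyChosen hP n).finite_toSet).nonempty

theorem greedyChosen_succ (n : ℕ) :
    greedyChosen hP (n + 1) = insert (greedyPick hP n) (greedyChosen hP n) :=
  rfl

theorem greedyPick_mem (n : ℕ) : greedyPick hP n ∈ P n \ greedyChosen hP n := by
  classical
  exact Nat.find_spec ((hP n).sdiff (greedyChosen hP n).finite_toSet).nonempty

theorem greedyPick_le {n k : ℕ} (hk : k ∈ P n) (hk' : k ∉ greedyChosen hP n) :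
    greedyPick hP n ≤ k := by
  classical
  exact Nat.find_min' _ ⟨hk, hk'⟩

theorem mem_greedyChosen {n k : ℕ} :
    k ∈ greedyChosen hP n ↔ ∃ m < n, greedyPick hP m = k := by
  induction n with
  | zero => simp [greedyChosen]
  | succ n ih =>
    simp only [greedyChosen_succ, Finset.mem_insert, ih, Nat.lt_succ_iff_lt_or_eq]
    grind

theorem greedyPick_injective : Function.Injective (greedyPick hP) :=
  .of_lt_imp_ne fun m n hmn h =>
    (greedyPick_mem hP n).2 <| (mem_greedyChosen hP).2 ⟨m, hmn, h⟩

theorem greedyPick_surjective (hmono : Monotone P) (hcover : ∀ k, ∃ n, k ∈ P n) :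
    Function.Surjective (greedyPick hP) := by
  intro k
  by_contra! hk
  obtain ⟨N, hN⟩ := hcover k
  have hle (n : ℕ) (hn : N ≤ n) : greedyPick hP n ≤ k :=
    greedyPick_le hP (hmono hn hN) fun h => by
      obtain ⟨m, -, hm⟩ := (mem_greedyChosen hP).1 h
      exact hk m hm
  have hcard := Finset.card_le_card_of_injOn (greedyPick hP) (s := Finset.Ico N (N + k + 2))
    (t := Finset.range (k + 1))
    (fun n hn => Finset.mem_range.2 <| Nat.lt_succ_of_le <| hle n (Finset.mem_Ico.1 hn).1)
    (greedyPick_injective hP).injOn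
  simp only [Nat.card_Ico, Finset.card_range] at hcard
  omega

theorem exists_bijective_forall_mem (hmono : Monotone P) (hinf : ∀ n, (P n).Infinite)
    (hcover : ∀ k, ∃ n, k ∈ P n) : ∃ c : ℕ → ℕ, Function.Bijective c ∧ ∀ n, c n ∈ P n :=
  ⟨greedyPick hinf, ⟨greedyPick_injective hinf, greedyPick_surjective hinf hmono hcover⟩,
    fun n => (greedyPick_mem hinf n).1⟩

theorem bijOn_sub_one : BijOn (· - 1) {j : ℕ | 1 ≤ j} univ :=
  ⟨mapsTo_univ _ _, fun a ha b hb h => by simp_all; omega, fun n _ => ⟨n + 1, by simp⟩⟩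

end Nat

theorem exists_bijOn_iUnion_forall_mem_of_monotone {X : Type*} {T : ℕ → Set X}
    (hmono : Monotone T) (hinf : ∀ n, (T n).Infinite) (hcount : (⋃ n, T n).Countable) :
    ∃ f : ℕ → X, BijOn f univ (⋃ n, T n) ∧ ∀ n, f n ∈ T n := by
  obtain ⟨_⟩ := countable_infinite_iff_nonempty_denumerable.1
    ⟨hcount, (hinf 0).mono (subset_iUnion T 0)⟩
  set e : ℕ ≃ ⋃ n, T n := (Denumerable.eqv _).symm
  have he : BijOn (fun k => (e k : X)) univ (⋃ n, T n) :=
    ⟨fun k _ => (e k).2, (Subtype.val_injective.comp e.injective).injOn,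
      fun x hx => ⟨e.symm ⟨x, hx⟩, trivial, by simp⟩⟩
  obtain ⟨c, hc, hcT⟩ := Nat.exists_bijective_forall_mem (P := fun n => {k | (e k : X) ∈ T n})
    (fun _ _ hmn _ => (hmono hmn ·))
    (fun n => (hinf n).preimage ((subset_iUnion T n).trans he.subset_range))
    (fun k => mem_iUnion.1 (e k).2 :)
  exact ⟨_, he.comp hc.bijOn_univ, hcT⟩

theorem Set.Countable.exists_bijOn_norm_lt_succ {E : Type*} [Norm E] {S : Set E}
    (hS : S.Countable) (hS₁ : {x ∈ S | ‖x‖ < 1}.Infinite) :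
    ∃ f : ℕ → E, BijOn f univ S ∧ ∀ n : ℕ, ‖f n‖ < n + 1 := by
  have hT : ⋃ n : ℕ, {x ∈ S | ‖x‖ < n + 1} = S := by
    refine Subset.antisymm (iUnion_subset fun _ _ hx => hx.1) fun x hx => ?_
    obtain ⟨n, hn⟩ := exists_nat_gt ‖x‖
    exact mem_iUnion.2 ⟨n, hx, hn.trans (lt_add_one _)⟩
  have hmono : Monotone fun n : ℕ => {x ∈ S | ‖x‖ < n + 1} := fun m n hmn x hx =>
    ⟨hx.1, hx.2.trans_le (by gcongr)⟩
  obtain ⟨f, hf, hfT⟩ := exists_bijOn_iUnion_forall_mem_of_monotone hmono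
    (fun n => hS₁.mono (hmono n.zero_le |>.trans' fun x hx => by simpa using hx))
    (hT.symm ▸ hS)
  exact ⟨f, hT ▸ hf, fun n => (hfT n).2⟩

theorem Set.bijOn_natCases {X : Type*} {f : ℕ → X} {S : Set X} {a : X} (hf : BijOn f univ S)
    (ha : a ∉ S) : BijOn (fun | 0 => a | n + 1 => f n) univ (insert a S) := by
  refine ⟨?_, ?_, ?_⟩
  · rintro (_ | n) -
    exacts [mem_insert a S, mem_insert_of_mem a (hf.mapsTo trivial)]
  · rintro (_ | m) - (_ | n) - h <;> dsimp only at h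
    · rfl
    · exact absurd (h ▸ hf.mapsTo trivial) ha
    · exact absurd (h.symm ▸ hf.mapsTo trivial) ha
    · exact congrArg (· + 1) (hf.injOn trivial trivial h)
  · rintro y (rfl | hy)
    · exact ⟨0, trivial, rfl⟩
    · obtain ⟨n, -, rfl⟩ := hf.surjOn hy
      exact ⟨n + 1, trivial, rfl⟩

theorem Set.bijOn_uncurry_of_fiberwise {ι κ X : Type*} (ℓ : X → ι) {S : Set X}
    {f : ι → κ → X} (hf : ∀ i, BijOn (f i) univ {x ∈ S | ℓ x = i}) :
    BijOn (fun p : κ × ι => f p.2 p.1) univ S := by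
  refine ⟨fun p _ => ((hf p.2).mapsTo trivial).1, ?_, fun x hx => ?_⟩
  · rintro ⟨k, i⟩ - ⟨l, j⟩ - (h : f i k = f j l)
    obtain rfl : i = j := ((hf i).mapsTo trivial).2.symm.trans (h ▸ ((hf j).mapsTo trivial).2)
    rw [(hf i).injOn trivial trivial h]
  · obtain ⟨k, -, hk⟩ := (hf (ℓ x)).surjOn ⟨hx, rfl⟩
    exact ⟨(k, ℓ x), trivial, hk⟩

def natEquivProdSignType : ℕ ≃ ℕ × SignType :=
  (Nat.divModEquiv 3).trans ((Equiv.refl ℕ).prodCongr SignType.fin3Equiv.toEquiv.symm)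

@[simp]
theorem natEquivProdSignType_apply (k : ℕ) (s : SignType) :
    natEquivProdSignType (3 * k + SignType.fin3Equiv s) = (k, s) := by
  rw [← Equiv.eq_symm_apply]
  simp [natEquivProdSignType, mul_comm]

namespace Complex

theorem countable_setOf_isAlgebraic_and (p : ℂ → Prop) :
    {z : ℂ | IsAlgebraic ℚ z ∧ p z}.Countable :=
  (Algebraic.countable ℚ ℂ).mono fun _ hz => hz.1

theorem isAlgebraic_I : IsAlgebraic ℚ I :=
  (isIntegral_int_I.tower_top (A := ℚ)).isAlgebraic

theorem isAlgebraic_conj {z : ℂ} (hz : IsAlgebraic ℚ z) : IsAlgebraic ℚ (conj z) :=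
  hz.algHom (conjAe.toAlgHom.restrictScalars ℚ)

theorem mapsTo_conj_setOf_isAlgebraic_sign_im (s : SignType) :
    MapsTo conj {z : ℂ | IsAlgebraic ℚ z ∧ SignType.sign z.im = s}
      {z | IsAlgebraic ℚ z ∧ SignType.sign z.im = -s} := fun z hz =>
  ⟨isAlgebraic_conj hz.1, by rw [conj_im, Left.sign_neg, hz.2]⟩

theorem bijOn_conj_setOf_isAlgebraic_sign_im (s : SignType) :
    BijOn conj {z : ℂ | IsAlgebraic ℚ z ∧ SignType.sign z.im = s}
      {z | IsAlgebraic ℚ z ∧ SignType.sign z.im = -s} :=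
  InvOn.bijOn ⟨fun z _ => conj_conj z, fun z _ => conj_conj z⟩
    (mapsTo_conj_setOf_isAlgebraic_sign_im s)
    (by simpa using mapsTo_conj_setOf_isAlgebraic_sign_im (-s))

theorem infinite_setOf_isAlgebraic_norm_lt_one {w : ℂ} (hw : IsAlgebraic ℚ w) (hw₁ : ‖w‖ = 1)
    {p : ℂ → Prop} (hp : ∀ q : ℚ, 0 < q → p (q * w)) :
    {z ∈ {z : ℂ | IsAlgebraic ℚ z ∧ p z} | ‖z‖ < 1}.Infinite := by
  have hw₀ : w ≠ 0 := norm_ne_zero_iff.1 (hw₁ ▸ one_ne_zero)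
  refine ((Ioo_infinite (zero_lt_one' ℚ)).image (f := fun q : ℚ => (q : ℂ) * w)
    fun q _ r _ h => ?_).mono ?_
  · exact_mod_cast mul_right_cancel₀ hw₀ h
  · rintro _ ⟨q, ⟨hq₀, hq₁⟩, rfl⟩
    refine ⟨⟨?_, hp q hq₀⟩, ?_⟩
    · exact isAlgebraic_iff_isIntegral.2 ((isAlgebraic_algebraMap q).isIntegral.mul hw.isIntegral)
    · rw [norm_mul, hw₁, mul_one, ← ofReal_ratCast, norm_real, Real.norm_eq_abs]
      exact_mod_cast (abs_of_pos hq₀).trans_lt hq₁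

theorem exists_bijOn_setOf_isAlgebraic_sign_im_eq_zero :
    ∃ ρ : ℕ → ℂ, BijOn ρ univ {z | IsAlgebraic ℚ z ∧ SignType.sign z.im = 0} ∧ ρ 0 = 0 ∧
      ∀ n : ℕ, ‖ρ (n + 1)‖ < n + 1 := by
  obtain ⟨ρ, hρ, hρ_norm⟩ := (countable_setOf_isAlgebraic_and fun z =>
      SignType.sign z.im = 0 ∧ z ≠ 0).exists_bijOn_norm_lt_succ
    (infinite_setOf_isAlgebraic_norm_lt_one isAlgebraic_one norm_one fun q hq => by simp [hq.ne'])
  refine ⟨fun | 0 => 0 | n + 1 => ρ n, ?_, rfl, hρ_norm⟩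
  convert bijOn_natCases hρ (a := 0) (by simp) using 1
  ext z
  by_cases hz : z = 0 <;> simp [hz, isAlgebraic_zero]

theorem exists_bijOn_setOf_isAlgebraic_sign_im_eq_one :
    ∃ ζ : ℕ → ℂ, BijOn ζ univ {z | IsAlgebraic ℚ z ∧ SignType.sign z.im = 1} ∧
      ∀ n : ℕ, ‖ζ n‖ < n + 1 :=
  (countable_setOf_isAlgebraic_and fun z => SignType.sign z.im = 1).exists_bijOn_norm_lt_succ
    (infinite_setOf_isAlgebraic_norm_lt_one isAlgebraic_I norm_I fun q hq => by simp [hq])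

end Complex

/-- There is an enumeration `(α n)` (a bijection from `{n : ℕ | 1 ≤ n}` onto
the set of algebraic numbers in `ℂ`) with `α 1 = 0` and such that for every `n ≥ 1`:
`α (3n-1)` and `α (3n)` are non-real with `α (3n)` the conjugate of `α (3n-1)`,
`α (3n+1)` is real, and `|α (3n+i)| < n` for `i ∈ {-1, 0, 1}`. -/
theorem exists_enumeration_of_algebraics :
    ∃ α : ℕ → ℂ,
      Set.BijOn α {n : ℕ | 1 ≤ n} {z : ℂ | IsAlgebraic ℚ z} ∧
      α 1 = 0 ∧
      ∀ n : ℕ, 1 ≤ n →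
        (α (3 * n - 1)).im ≠ 0 ∧
        (α (3 * n)).im ≠ 0 ∧
        α (3 * n) = starRingEnd ℂ (α (3 * n - 1)) ∧
        (α (3 * n + 1)).im = 0 ∧
        ‖α (3 * n - 1)‖ < n ∧
        ‖α (3 * n)‖ < n ∧
        ‖α (3 * n + 1)‖ < n := by
  obtain ⟨ρ, hρ, hρ₀, hρ_norm⟩ := exists_bijOn_setOf_isAlgebraic_sign_im_eq_zero
  obtain ⟨ζ, hζ, hζ_norm⟩ := exists_bijOn_setOf_isAlgebraic_sign_im_eq_one
  let F : SignType → ℕ → ℂ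
    | 0 => ρ
    | 1 => ζ
    | -1 => conj ∘ ζ
  have hF (s : SignType) : BijOn (F s) univ {z | IsAlgebraic ℚ z ∧ SignType.sign z.im = s} := by
    cases s
    exacts [hρ, (bijOn_conj_setOf_isAlgebraic_sign_im 1).comp hζ, hζ]
  let α (j : ℕ) : ℂ := F (natEquivProdSignType (j - 1)).2 (natEquivProdSignType (j - 1)).1
  have hα (k : ℕ) (s : SignType) : α (3 * k + SignType.fin3Equiv s + 1) = F s k := by simp [α]
  refine ⟨α, (bijOn_uncurry_of_fiberwise (f := F) (fun z : ℂ => SignType.sign z.im) hF).comp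
    (natEquivProdSignType.bijective.bijOn_univ.comp Nat.bijOn_sub_one), hρ₀, fun n hn => ?_⟩
  obtain ⟨k, rfl⟩ := Nat.exists_eq_add_of_le' hn
  have hα₁ : α (3 * (k + 1) - 1) = ζ k :=
    (congrArg α (by simp [SignType.fin3Equiv]; omega)).trans (hα k 1)
  have hα₂ : α (3 * (k + 1)) = conj (ζ k) :=
    (congrArg α (by simp [SignType.fin3Equiv]; omega)).trans (hα k (-1))
  have hα₃ : α (3 * (k + 1) + 1) = ρ (k + 1) :=
    (congrArg α (by simp [SignType.fin3Equiv])).trans (hα (k + 1) 0)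
  have hζk : 0 < (ζ k).im := sign_eq_one_iff.1 (hζ.mapsTo (mem_univ k)).2
  have hρk : (ρ (k + 1)).im = 0 := sign_eq_zero_iff.1 (hρ.mapsTo (mem_univ _)).2
  rw [hα₁, hα₂, hα₃, conj_im, norm_conj, Nat.cast_add_one]
  exact ⟨hζk.ne', neg_ne_zero.2 hζk.ne', rfl, hρk, hζ_norm k, hζ_norm k, hρ_norm k⟩
end

section
/- Let f : ℂ → ℂ be an entire function, let (f_n) be a sequence of entire functions converging to f locally uniformly on ℂ, and suppose f is nonconstant. Let α ∈ ℂ, r > 0, and let S ⊆ {z : |z| < r} be a finite set such that for all sufficiently large n, {z : |z| < r and f_n(z) = α} = S. Then {z : |z| < r and f(z) = α} = S. -/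
/-! Hurwitz's argument. If `f z = α` with `‖z‖ < r` and `z ∉ S`, choose a small circle around `z`
inside the disc, enclosing no point of `S`, on which `f ≠ α` (the `α`-points of a nonconstant
entire function are isolated). On that circle `‖f - α‖ ≥ m > 0`, so for large `n` also
`‖fn n - α‖ ≥ m / 2` there, while `‖fn n z - α‖ < m / 2`. By the minimum modulus principle
`fn n - α` must vanish inside the circle, giving an `α`-point of `fn n` in the disc outside `S`. -/

open Bornology Filter Metric Set Topology

theorem Metric.exists_ball_subset_and_sphere_subset {X : Type*} [MetricSpace X] {z : X}
    {U V : Set X} (hU : U ∈ 𝓝 z) (hV : V ∈ 𝓝[≠] z) :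
    ∃ δ > 0, ball z δ ⊆ U ∧ sphere z δ ⊆ V := by
  obtain ⟨ε, hε, hεU⟩ := Metric.mem_nhds_iff.mp hU
  obtain ⟨ε', hε', hε'V⟩ := Metric.mem_nhdsWithin_iff.mp hV
  refine ⟨min ε ε' / 2, by positivity, fun w hw => hεU ?_, fun w hw => hε'V ⟨?_, ?_⟩⟩
  · exact ball_subset_ball (by linarith [min_le_left ε ε']) hw
  · rw [mem_sphere] at hw
    rw [mem_ball, hw]
    linarith [min_le_right ε ε', lt_min hε hε']
  · rintro rfl
    rw [mem_sphere, dist_self] at hw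
    linarith [lt_min hε hε']

namespace Complex

theorem le_norm_of_forall_mem_frontier_le_norm {E : Type*} [NormedAddCommGroup E]
    [NormedSpace ℂ E] [Nontrivial E] {g : E → ℂ} {U : Set E} (hU : IsBounded U)
    (hg : DiffContOnCl ℂ g U) (hg0 : ∀ w ∈ closure U, g w ≠ 0) {C : ℝ} (hC : ∀ w ∈ frontier U, C ≤ ‖g w‖) {z : E}
    (hz : z ∈ closure U) : C ≤ ‖g z‖ := by
  rcases le_or_gt C 0 with hC0 | hC0
  · exact hC0.trans (norm_nonneg _)
  have hinv : ‖(g z)⁻¹‖ ≤ C⁻¹ := by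
    refine norm_le_of_forall_mem_frontier_norm_le hU (hg.inv fun w hw => hg0 w hw) ?_ hz
    intro w hw
    rw [Pi.inv_apply, norm_inv]
    exact inv_anti₀ hC0 (hC w hw)
  rw [norm_inv] at hinv
  exact (inv_le_inv₀ (norm_pos_iff.mpr (hg0 z hz)) hC0).mp hinv

theorem eventually_exists_mem_ball_eq_of_tendstoUniformlyOn {ι : Type*} {l : Filter ι}
    {F : ι → ℂ → ℂ} {f : ℂ → ℂ} {z α : ℂ} {δ : ℝ} (hδ : 0 < δ)
    (hF : ∀ i, DiffContOnCl ℂ (F i) (ball z δ)) (hf : ContinuousOn f (sphere z δ))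
    (hconv : TendstoUniformlyOn F f l (closedBall z δ)) (hfz : f z = α)
    (hsphere : ∀ w ∈ sphere z δ, f w ≠ α) :
    ∀ᶠ i in l, ∃ w ∈ ball z δ, F i w = α := by
  obtain ⟨m, hm, hfm⟩ : ∃ m > 0, ∀ w ∈ sphere z δ, m ≤ ‖f w - α‖ :=
    (isCompact_sphere z δ).exists_forall_le' (hf.sub continuousOn_const).norm
      fun w hw => norm_pos_iff.mpr (sub_ne_zero.mpr (hsphere w hw))
  filter_upwards [Metric.tendstoUniformlyOn_iff.mp hconv (m / 2) (by positivity)] with i hi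
  by_contra! hne
  have hclosure : closure (ball z δ) = closedBall z δ := closure_ball z hδ.ne'
  have hz : z ∈ closure (ball z δ) := hclosure ▸ mem_closedBall_self hδ.le
  have hFi_sphere : ∀ w ∈ sphere z δ, m / 2 ≤ ‖F i w - α‖ := fun w hw => by
    have hclose := hi w (sphere_subset_closedBall hw)
    rw [dist_eq_norm] at hclose
    linarith [hfm w hw, norm_sub_le_norm_sub_add_norm_sub (f w) (F i w) α]
  have hlower : m / 2 ≤ ‖F i z - α‖ := by
    refine le_norm_of_forall_mem_frontier_le_norm isBounded_ball ((hF i).sub_const α) ?_ ?_ hz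
    · intro w hw
      rw [hclosure, ← ball_union_sphere] at hw
      rcases hw with hw | hw
      · exact sub_ne_zero.mpr (hne w hw)
      · exact norm_pos_iff.mp (by linarith [hFi_sphere w hw])
    · rwa [frontier_ball z hδ.ne']
  have hupper : ‖F i z - α‖ < m / 2 := by
    simpa [dist_eq_norm, hfz, norm_sub_rev] using hi z (hclosure ▸ hz)
  linarith

end Complex

theorem Differentiable.eventually_ne_nhdsNE_of_not_const {f : ℂ → ℂ} (hf : Differentiable ℂ f)
    (hnc : ¬ ∃ c : ℂ, f = fun _ => c) (z α : ℂ) : ∀ᶠ w in 𝓝[≠] z, f w ≠ α := by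
  refine ((hf.analyticAt z).eventually_eq_or_eventually_ne analyticAt_const).resolve_left
    fun hfα => hnc ⟨α, ?_⟩
  exact AnalyticOnNhd.eq_of_eventuallyEq (fun w _ => hf.analyticAt w)
    (fun _ _ => analyticAt_const) hfα

theorem limit_preimage_eq_general (f : ℂ → ℂ) (hf : Differentiable ℂ f)
    (fn : ℕ → ℂ → ℂ) (hfn : ∀ n, Differentiable ℂ (fn n))
    (hconv : TendstoLocallyUniformly fn f Filter.atTop)
    (hnc : ¬ ∃ c : ℂ, f = fun _ => c)
    (α : ℂ) (r : ℝ)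
    (S : Set ℂ) (hSfin : S.Finite) (hSball : S ⊆ {z : ℂ | ‖z‖ < r})
    (heq : ∀ᶠ n in Filter.atTop, {z : ℂ | ‖z‖ < r ∧ fn n z = α} = S) :
    {z : ℂ | ‖z‖ < r ∧ f z = α} = S := by
  ext z
  refine ⟨fun ⟨hzr, hfz⟩ => ?_, fun hzS => ⟨hSball hzS, ?_⟩⟩
  · by_contra hzS
    have hU : {w : ℂ | ‖w‖ < r} ∩ Sᶜ ∈ 𝓝 z :=
      inter_mem ((isOpen_lt continuous_norm continuous_const).mem_nhds hzr)
        (hSfin.isClosed.compl_mem_nhds hzS)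
    obtain ⟨δ, hδ, hball, hsphere⟩ :=
      exists_ball_subset_and_sphere_subset hU (hf.eventually_ne_nhdsNE_of_not_const hnc z α)
    have hroots := Complex.eventually_exists_mem_ball_eq_of_tendstoUniformlyOn hδ
      (fun n => (hfn n).diffContOnCl) hf.continuous.continuousOn
      (tendstoLocallyUniformly_iff_forall_isCompact.mp hconv _ (isCompact_closedBall z δ))
      hfz hsphere
    obtain ⟨n, ⟨w, hw, hfnw⟩, hSn⟩ := (hroots.and heq).exists
    obtain ⟨hwr, hwS⟩ := hball hw
    exact hwS (hSn ▸ ⟨hwr, hfnw⟩)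
  · have hfnz : (fun _ => α) =ᶠ[atTop] fun n => fn n z :=
      heq.mono fun n hn => ((hn ▸ hzS).2).symm
    exact tendsto_nhds_unique (hconv.tendstoLocallyUniformlyOn.tendsto_at (mem_univ z))
      (tendsto_const_nhds.congr' hfnz)

/-- If entire functions `f n` converge locally uniformly to a nonconstant
entire function `f`, and for all large `n` the `α`-points of `f n` in the open disc of
radius `r` form the fixed finite set `S ⊆ B(0,r)`, then the `α`-points of `f` in that
disc are exactly `S`. -/
theorem limit_preimage_eq (f : ℂ → ℂ) (hf : Differentiable ℂ f)
    (fn : ℕ → ℂ → ℂ) (hfn : ∀ n, Differentiable ℂ (fn n))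
    (hconv : TendstoLocallyUniformly fn f Filter.atTop)
    (hnc : ¬ ∃ c : ℂ, f = fun _ => c)
    (α : ℂ) (r : ℝ) (hr : 0 < r)
    (S : Set ℂ) (hSfin : S.Finite) (hSball : S ⊆ {z : ℂ | ‖z‖ < r})
    (heq : ∀ᶠ n in Filter.atTop, {z : ℂ | ‖z‖ < r ∧ fn n z = α} = S) :
    {z : ℂ | ‖z‖ < r ∧ f z = α} = S :=
  limit_preimage_eq_general f hf fn hfn hconv hnc α r S hSfin hSball heq
end

section
/- Let f : ℂ → ℂ be a nonconstant entire function and (f_n) a sequence of entire functions converging to f locally uniformly on ℂ. If f(w) = α for some w ∈ ℂ and α ∈ ℂ, then for every ε > 0 there exists N such that for all n ≥ N there is some z with |z − w| < ε and f_n(z) = α. -/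
open Metric Filter Topology

/-! Zeros of `f - α` are isolated, so there is a circle of radius `r < ε` about `w` on which
`‖f - α‖ ≥ m > 0`. For large `n`, `‖fₙ - α‖ ≥ m / 2` on that circle while `‖fₙ w - α‖ < m / 2`;
if `fₙ - α` had no zero in the disc, the maximum modulus principle for `(fₙ - α)⁻¹` would
give the opposite inequality. -/

theorem Complex.exists_mem_closure_eq_zero_of_norm_lt {E : Type*} [NormedAddCommGroup E]
    [NormedSpace ℂ E] [Nontrivial E] {U : Set E} {g : E → ℂ} {m : ℝ} (hU : Bornology.IsBounded U)
    (hg : DiffContOnCl ℂ g U) {z : E} (hz : z ∈ closure U) (hlt : ‖g z‖ < m)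
    (hle : ∀ ζ ∈ frontier U, m ≤ ‖g ζ‖) : ∃ ζ ∈ closure U, g ζ = 0 := by
  by_contra! hg₀
  have hm : 0 < m := (norm_nonneg _).trans_lt hlt
  have hinv : ‖(g z)⁻¹‖ ≤ m⁻¹ :=
    norm_le_of_forall_mem_frontier_norm_le hU (hg.inv hg₀)
      (fun ζ hζ => by rw [Pi.inv_apply, norm_inv]; exact inv_anti₀ hm (hle ζ hζ)) hz
  rw [norm_inv] at hinv
  exact (inv_lt_inv₀ hm (norm_pos_iff.mpr (hg₀ z hz))).mpr hlt |>.not_ge hinv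

theorem Differentiable.eventually_nhdsNE_ne_of_not_const {E : Type*} [NormedAddCommGroup E]
    [NormedSpace ℂ E] [CompleteSpace E] {f : ℂ → E} (hf : Differentiable ℂ f)
    (hnc : ¬∃ c : E, f = fun _ => c) (w : ℂ) (α : E) : ∀ᶠ z in 𝓝[≠] w, f z ≠ α := by
  by_contra h
  rw [not_eventually] at h
  simp only [not_not] at h
  exact hnc ⟨α, (Complex.analyticOnNhd_univ_iff_differentiable.mpr hf).eq_of_frequently_eq
    analyticOnNhd_const h⟩

theorem Filter.Eventually.exists_forall_mem_sphere {X : Type*} [PseudoMetricSpace X]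
    {P : X → Prop} {w : X} (h : ∀ᶠ z in 𝓝[≠] w, P z) {ε : ℝ} (hε : 0 < ε) :
    ∃ r, 0 < r ∧ r < ε ∧ ∀ z ∈ sphere w r, P z := by
  obtain ⟨δ, hδ, hP⟩ := nhdsWithin_basis_ball.eventually_iff.mp h
  refine ⟨min (δ / 2) (ε / 2), by positivity, by linarith [min_le_right (δ / 2) (ε / 2)],
    fun z hz => hP ⟨?_, ?_⟩⟩
  · rw [mem_sphere] at hz
    rw [mem_ball, hz]
    linarith [min_le_left (δ / 2) (ε / 2)]
  · rintro rfl
    rw [mem_sphere, dist_self] at hz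
    exact (lt_min (half_pos hδ) (half_pos hε)).ne hz

theorem TendstoUniformlyOn.eventually_exists_mem_closedBall_eq {ι : Type*} {l : Filter ι}
    [l.NeBot] {fn : ι → ℂ → ℂ} {f : ℂ → ℂ} {w α : ℂ} {r : ℝ} (hr : 0 < r)
    (hfn : ∀ᶠ n in l, DifferentiableOn ℂ (fn n) (closedBall w r))
    (hconv : TendstoUniformlyOn fn f l (closedBall w r)) (hw : f w = α)
    (hsphere : ∀ z ∈ sphere w r, f z ≠ α) :
    ∀ᶠ n in l, ∃ z ∈ closedBall w r, fn n z = α := by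
  have hf : ContinuousOn f (sphere w r) :=
    (hconv.continuousOn (hfn.mono fun _ h => h.continuousOn).frequently).mono
      sphere_subset_closedBall
  obtain ⟨m, hm, hm_le⟩ := (isCompact_sphere w r).exists_forall_le'
    (f := fun z => ‖f z - α‖) (hf.sub continuousOn_const).norm (a := 0)
    fun z hz => norm_pos_iff.mpr (sub_ne_zero.mpr (hsphere z hz))
  have hunif := Metric.tendstoUniformlyOn_iff.mp hconv (m / 2) (half_pos hm)
  have hcenter := Metric.tendsto_nhds.mp (hconv.tendsto_at (mem_closedBall_self hr.le))
    (m / 2) (half_pos hm)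
  filter_upwards [hfn, hunif, hcenter] with n hdiff hnear hnear_w
  have hbound : ∀ z ∈ frontier (ball w r), m / 2 ≤ ‖fn n z - α‖ := by
    intro z hz
    rw [frontier_ball w hr.ne'] at hz
    have := hnear z (sphere_subset_closedBall hz)
    rw [dist_eq_norm] at this
    calc m / 2 = m - m / 2 := by ring
      _ ≤ ‖f z - α‖ - ‖f z - fn n z‖ := by linarith [hm_le z hz]
      _ ≤ ‖fn n z - α‖ := by
        simpa using norm_sub_norm_le (f z - α) (f z - fn n z)
  obtain ⟨z, hz, hz₀⟩ := Complex.exists_mem_closure_eq_zero_of_norm_lt isBounded_ball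
    ((hdiff.sub_const α).diffContOnCl_ball le_rfl) (subset_closure (mem_ball_self hr))
    (by rwa [← dist_eq_norm, ← hw]) hbound
  exact ⟨z, closure_ball w hr.ne' ▸ hz, sub_eq_zero.mp hz₀⟩

/-- (Hurwitz-type statement) If entire functions `f n` converge locally
uniformly to a nonconstant entire function `f` and `f w = α`, then for every `ε > 0`
there is `N` such that for all `n ≥ N` there is `z` with `|z - w| < ε` and `f n z = α`. -/
theorem hurwitz_nearby_solutions (f : ℂ → ℂ) (hf : Differentiable ℂ f)
    (hnc : ¬ ∃ c : ℂ, f = fun _ => c)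
    (fn : ℕ → ℂ → ℂ) (hfn : ∀ n, Differentiable ℂ (fn n))
    (hconv : TendstoLocallyUniformly fn f Filter.atTop)
    (w α : ℂ) (hw : f w = α) (ε : ℝ) (hε : 0 < ε) :
    ∃ N : ℕ, ∀ n ≥ N, ∃ z : ℂ, ‖z - w‖ < ε ∧ fn n z = α := by
  obtain ⟨r, hr, hrε, hsphere⟩ :=
    (hf.eventually_nhdsNE_ne_of_not_const hnc w α).exists_forall_mem_sphere hε
  have hunif : TendstoUniformlyOn fn f atTop (closedBall w r) :=
    tendstoLocallyUniformly_iff_forall_isCompact.mp hconv _ (isCompact_closedBall w r)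
  obtain ⟨N, hN⟩ := eventually_atTop.mp (hunif.eventually_exists_mem_closedBall_eq hr
    (Eventually.of_forall fun n => (hfn n).differentiableOn) hw hsphere)
  refine ⟨N, fun n hn => ?_⟩
  obtain ⟨z, hz, hfz⟩ := hN n hn
  exact ⟨z, (mem_closedBall_iff_norm.mp hz).trans_lt hrε, hfz⟩
end

section
/- Let f : ℂ → ℂ be an entire function which is algebraic, i.e. there exists a nonzero polynomial P ∈ ℂ[X,Y] with P(z, f(z)) = 0 for all z ∈ ℂ, and suppose f(Q̄) ⊆ Q̄. Then f is a polynomial function with algebraic coefficients: there exists Q ∈ Q̄[z] with f(z) = Q(z) for all z ∈ ℂ. -/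
/-!
An algebraic function has polynomial growth: if `P(z, f z) = 0` with `P = ∑ aₖ(z) Yᵏ`, then
Cauchy's root bound gives `‖f z‖ ≤ 1 + ∑ₖ ‖aₖ(z)‖ / ‖aₙ(z)‖`, and the leading coefficient `aₙ`
is bounded away from `0` near infinity. By Cauchy's estimates, an entire function of growth `O(zᵐ)`
has vanishing derivatives of order `> m` at `0`, so its Taylor series is a polynomial `Q`.
Finally `Q` takes algebraic values at the integers `0, …, deg Q`, so Lagrange interpolation
exhibits its coefficients as algebraic numbers.
-/

open Polynomial Polynomial.Bivariate Filter Bornology Asymptotics Finset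

theorem Polynomial.IsRoot.norm_le_one_add_sum_div_leadingCoeff {K : Type*}
    [NormedDivisionRing K] {p : K[X]} (hp : p ≠ 0) {a : K} (h : p.IsRoot a) :
    ‖a‖ ≤ 1 + ∑ k ∈ range p.natDegree, ‖p.coeff k‖ / ‖p.leadingCoeff‖ := by
  set n := p.natDegree
  have hsup : (range n).sup (‖p.coeff ·‖₊) ≤ ∑ k ∈ range n, ‖p.coeff k‖₊ :=
    Finset.sup_le fun k hk => single_le_sum (f := (‖p.coeff ·‖₊)) (fun _ _ => zero_le) hk
  have hbound : ‖a‖₊ ≤ 1 + ∑ k ∈ range n, ‖p.coeff k‖₊ / ‖p.leadingCoeff‖₊ := by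
    rw [← sum_div, add_comm]
    exact (h.norm_lt_cauchyBound hp).le.trans (by unfold cauchyBound; gcongr)
  simpa using NNReal.coe_le_coe.2 hbound

section Cobounded

variable {R : Type*} [NormedRing R] [NormMulClass R] [Nontrivial R]

theorem Polynomial.isBigO_cobounded_pow {p : R[X]} {m : ℕ} (hp : p.natDegree ≤ m) :
    p.eval =O[cobounded R] (· ^ m) := by
  convert isBigO_cobounded_of_degree_le (P := p) (Q := X ^ m)
    (by rw [degree_X_pow]; exact degree_le_of_natDegree_le hp) using 2
  rw [X_pow_eq_monomial, eval_monomial, one_mul]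

theorem Polynomial.isBigO_cobounded_one_eval {p : R[X]} (hp : p ≠ 0) :
    (fun _ => (1 : R)) =O[cobounded R] p.eval := by
  simpa using isBigO_cobounded_of_degree_le (P := C 1) (Q := p)
    (by rw [degree_C one_ne_zero]; exact zero_le_degree_iff.2 hp)

end Cobounded

theorem Polynomial.Bivariate.eval_equivMvPolynomial {R : Type*} [CommSemiring R]
    (v : Fin 2 → R) (p : R[X][Y]) :
    MvPolynomial.eval v (equivMvPolynomial R p) = p.evalEval (v 0) (v 1) := by
  rw [← coe_aevalAeval_eq_evalEval, ← MvPolynomial.coe_aeval_eq_eval]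
  have : (MvPolynomial.aeval v).comp (equivMvPolynomial R).toAlgHom =
      aevalAeval (v 0) (v 1) := by
    ext <;> simp
  exact AlgHom.congr_fun this p

theorem Polynomial.Bivariate.norm_le_of_evalEval_eq_zero {K : Type*} [NormedField K]
    {p : K[X][Y]} {z w : K} (hz : p.leadingCoeff.eval z ≠ 0) (h : p.evalEval z w = 0) :
    ‖w‖ ≤ 1 + ∑ k ∈ range p.natDegree, ‖(p.coeff k).eval z‖ / ‖p.leadingCoeff.eval z‖ := by
  have hdeg : (p.map (evalRingHom z)).natDegree = p.natDegree :=
    natDegree_map_of_leadingCoeff_ne_zero _ hz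
  have hlc : (p.map (evalRingHom z)).leadingCoeff = p.leadingCoeff.eval z :=
    leadingCoeff_map_of_leadingCoeff_ne_zero _ hz
  have hne : p.map (evalRingHom z) ≠ 0 := by
    rw [← leadingCoeff_ne_zero, hlc]
    exact hz
  simpa only [hdeg, hlc, coeff_map, coe_evalRingHom] using
    IsRoot.norm_le_one_add_sum_div_leadingCoeff hne (by rw [IsRoot, map_evalRingHom_eval, h])

theorem Polynomial.Bivariate.exists_isBigO_cobounded_pow_of_evalEval_eq_zero {K : Type*}
    [NormedField K] {p : K[X][Y]} (hp : p ≠ 0) {f : K → K} (hf : ∀ z, p.evalEval z (f z) = 0) :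
    ∃ m : ℕ, f =O[cobounded K] (· ^ m) := by
  set n := p.natDegree
  set lead := p.leadingCoeff
  have hlead : (fun _ => (1 : K)) =O[cobounded K] lead.eval :=
    isBigO_cobounded_one_eval (leadingCoeff_ne_zero.2 hp)
  set m := (range n).sup fun k => (p.coeff k).natDegree
  have hquot : ∀ k ∈ range n,
      (fun z => ‖(p.coeff k).eval z‖ / ‖lead.eval z‖) =O[cobounded K] (· ^ m) := by
    intro k hk
    simpa [div_eq_mul_inv] using
      ((isBigO_cobounded_pow (le_sup (f := fun k => (p.coeff k).natDegree) hk)).mul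
        (hlead.inv_rev (by simp))).norm_left
  have hone : (fun _ => (1 : ℝ)) =O[cobounded K] (· ^ m) :=
    (isBigO_const_const (1 : ℝ) one_ne_zero _).trans
      (by simpa using isBigO_pow_pow_cobounded_of_le (R := K) (Nat.zero_le m))
  refine ⟨m, IsBigO.trans (IsBigO.of_bound' ?_) (hone.add (IsBigO.fun_sum hquot))⟩
  filter_upwards [hlead.eq_zero_imp] with z hz
  rw [Real.norm_of_nonneg (by positivity)]
  exact norm_le_of_evalEval_eq_zero (fun h => one_ne_zero (hz h)) (hf z)

theorem Differentiable.iteratedDeriv_eq_zero_of_isBigO_pow {F : Type*} [NormedAddCommGroup F]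
    [NormedSpace ℂ F] [CompleteSpace F] {f : ℂ → F} (hf : Differentiable ℂ f) {m n : ℕ}
    (hfm : f =O[cobounded ℂ] (· ^ m)) (hmn : m < n) : iteratedDeriv n f 0 = 0 := by
  obtain ⟨C, hC0, hC⟩ := hfm.exists_nonneg
  obtain ⟨R₀, hR₀⟩ :=
    eventually_atTop.1 (eventually_comap.1 (comap_norm_atTop (E := ℂ) ▸ hC.bound))
  have hcauchy : ∀ R ≥ max 1 R₀, ‖iteratedDeriv n f 0‖ ≤ n.factorial * C / R := by
    intro R hR
    have hR1 : 1 ≤ R := le_of_max_le_left hR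
    have hRpos : 0 < R := one_pos.trans_le hR1
    calc ‖iteratedDeriv n f 0‖ ≤ n.factorial * (C * R ^ m) / R ^ n := by
          refine Complex.norm_iteratedDeriv_le_of_forall_mem_sphere_norm_le n hRpos
            hf.diffContOnCl fun z hz => ?_
          rw [mem_sphere_zero_iff_norm] at hz
          simpa [hz] using hR₀ R (le_of_max_le_right hR) z hz
      _ = n.factorial * C * R ^ (m + 1) / R ^ n / R := by
          field_simp
          ring
      _ ≤ n.factorial * C * R ^ n / R ^ n / R := by
          gcongr
          exact hmn
      _ = n.factorial * C / R := by field_simp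
  have hlim := (tendsto_const_nhds (x := (n.factorial * C : ℝ))).div_atTop tendsto_id
  exact norm_le_zero_iff.1 <| ge_of_tendsto hlim <| eventually_atTop.2 ⟨_, hcauchy⟩

theorem Differentiable.exists_polynomial_eq_of_isBigO_pow {f : ℂ → ℂ} (hf : Differentiable ℂ f)
    {m : ℕ} (hfm : f =O[cobounded ℂ] (· ^ m)) : ∃ Q : ℂ[X], ∀ z, f z = Q.eval z := by
  refine ⟨∑ k ∈ range (m + 1), C ((k.factorial : ℂ)⁻¹ * iteratedDeriv k f 0) * X ^ k,
    fun z => ?_⟩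
  rw [← Complex.taylorSeries_eq_of_entire' 0 z hf, tsum_eq_sum (s := range (m + 1)),
    eval_finsetSum]
  · simp
  · intro k hk
    rw [hf.iteratedDeriv_eq_zero_of_isBigO_pow hfm (by simpa using hk)]
    ring

theorem Polynomial.mem_lifts_of_eval_mem_range {K L : Type*} [Field K] [Field L] (φ : K →+* L)
    {Q : L[X]} (s : Finset K) (hdeg : Q.degree < #s)
    (hval : ∀ x ∈ s, Q.eval (φ x) ∈ Set.range φ) : Q ∈ lifts φ := by
  classical
  choose! v hv using hval
  have hinj : Set.InjOn id (s : Set K) := Set.injOn_id _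
  refine (mem_lifts Q).2 ⟨Lagrange.interpolate s id v, ?_⟩
  refine eq_of_degrees_lt_of_eval_finset_eq (s.map ⟨φ, φ.injective⟩) ?_ ?_ ?_
  · rw [card_map, degree_map]
    exact Lagrange.degree_interpolate_lt _ hinj
  · rwa [card_map]
  · refine Finset.forall_mem_map.2 fun x hx => ?_
    rw [Function.Embedding.coeFn_mk, eval_map, eval₂_at_apply, ← hv x hx]
    exact congrArg φ (Lagrange.eval_interpolate_at_node v hinj hx)

theorem Polynomial.isAlgebraic_coeff_of_isAlgebraic_eval_natCast {F E : Type*} [Field F]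
    [Field E] [Algebra F E] [CharZero E] {Q : E[X]}
    (hQ : ∀ n : ℕ, IsAlgebraic F (Q.eval (n : E))) (i : ℕ) : IsAlgebraic F (Q.coeff i) := by
  have hlifts : Q ∈ lifts (algebraMap (algebraicClosure F E) E) := by
    refine mem_lifts_of_eval_mem_range _
      ((range (Q.natDegree + 1)).map ⟨Nat.cast, Nat.cast_injective⟩) ?_ ?_
    · rw [card_map, card_range]
      exact degree_le_natDegree.trans_lt (by exact_mod_cast Nat.lt_succ_self _)
    · refine Finset.forall_mem_map.2 fun n _ => ?_
      rw [Function.Embedding.coeFn_mk, map_natCast]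
      exact ⟨⟨_, mem_algebraicClosure_iff.2 (hQ n)⟩, rfl⟩
  obtain ⟨y, hy⟩ := (lifts_iff_coeff_lifts Q).1 hlifts i
  rw [← hy]
  exact mem_algebraicClosure_iff.1 y.2

/-- An algebraic entire function mapping algebraic numbers to algebraic
numbers is a polynomial with algebraic coefficients. -/
theorem algebraic_entire_is_polynomial (f : ℂ → ℂ) (hf : Differentiable ℂ f)
    (halg : ∃ P : MvPolynomial (Fin 2) ℂ, P ≠ 0 ∧
      ∀ z : ℂ, MvPolynomial.eval ![z, f z] P = 0)
    (hQ : ∀ z : ℂ, IsAlgebraic ℚ z → IsAlgebraic ℚ (f z)) :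
    ∃ Q : Polynomial ℂ, (∀ i : ℕ, IsAlgebraic ℚ (Q.coeff i)) ∧
      ∀ z : ℂ, f z = Q.eval z := by
  obtain ⟨P, hP0, hPf⟩ := halg
  obtain ⟨p, rfl⟩ := (equivMvPolynomial ℂ).surjective P
  obtain ⟨m, hfm⟩ := exists_isBigO_cobounded_pow_of_evalEval_eq_zero (by simpa using hP0)
    fun z => by simpa [eval_equivMvPolynomial] using hPf z
  obtain ⟨Q, hfQ⟩ := hf.exists_polynomial_eq_of_isBigO_pow hfm
  refine ⟨Q, isAlgebraic_coeff_of_isAlgebraic_eval_natCast fun n => ?_, hfQ⟩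
  rw [← hfQ]
  exact hQ n (isAlgebraic_natCast n)
end
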